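/- Let L be a finitely generated free abelian group with involutive automorphism θ, let Q ⊆ L be a θ-stable finite-index subgroup, and let L₋ = {ν ∈ L : θ(ν) = −ν}, Q₋ = Q ∩ L₋, and L̃₋ the image of L under the projection ν ↦ (ν − θ(ν))/2 inside L ⊗ ℚ. Then there is a group isomorphism (L₋ + Q)/((1−θ)(L) + Q) ≅ L₋/(2L̃₋ + Q₋). -/

import Mathlib

/-!
Both quotients are quotients of `L₋`. Since `Q ≤ (1-θ)(L) + Q`, every class of `L₋ + Q` has a
representative in `L₋`; and since `(1-θ)(L) ≤ L₋`, an element of `L₋` lies in `(1-θ)(L) + Q`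
exactly when it lies in `(1-θ)(L) + Q₋`.
-/

namespace QuotientGroup

open Subgroup

@[to_additive]
noncomputable def quotientInfEquivSupQuotientOfLE {G : Type*} [CommGroup G] (H Q N : Subgroup G)
    (hQN : Q ≤ N) :
    H ⧸ N.subgroupOf H ≃* ↥(H ⊔ Q) ⧸ N.subgroupOf (H ⊔ Q) :=
  let φ : H →* ↥(H ⊔ Q) ⧸ N.subgroupOf (H ⊔ Q) :=
    (mk' (N.subgroupOf (H ⊔ Q))).comp (inclusion le_sup_left)
  have hφ : Function.Surjective φ := fun y => y.inductionOn fun z => by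
    obtain ⟨h, hh, q, hq, hhq⟩ := mem_sup.mp z.2
    refine ⟨⟨h, hh⟩, eq_iff_div_mem.mpr ?_⟩
    rw [mem_subgroupOf, coe_div, coe_inclusion, ← hhq, div_mul_cancel_left]
    exact inv_mem (hQN hq)
  (quotientMulEquivOfEq (by ext; simp [φ, mem_subgroupOf])).trans
    (quotientKerEquivOfSurjective φ hφ)

end QuotientGroup

theorem stmt_16_general {L : Type*} [AddCommGroup L]
    (θ : L ≃+ L) (hθ : ∀ x, θ (θ x) = x)
    (Q : AddSubgroup L)
    (Lm A B : AddSubgroup L)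
    (hLm : ∀ x : L, x ∈ Lm ↔ θ x = -x)
    (hA : ∀ x : L, x ∈ A ↔ ∃ μ : L, ∃ q ∈ Q, x = (μ - θ μ) + q)
    (hB : ∀ x : L, x ∈ B ↔ ∃ μ : L, ∃ q ∈ Q ⊓ Lm, x = (μ - θ μ) + q) :
    A ≤ Lm ⊔ Q ∧ B ≤ Lm ∧
    Nonempty ((↥(Lm ⊔ Q) ⧸ A.addSubgroupOf (Lm ⊔ Q)) ≃+
      (Lm ⧸ B.addSubgroupOf Lm)) := by
  have hD : ∀ μ, μ - θ μ ∈ Lm := fun μ => by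
    rw [hLm, map_sub, hθ, neg_sub]
  have hQA : Q ≤ A := fun q hq => (hA q).mpr ⟨0, q, hq, by simp⟩
  have hBA : B.addSubgroupOf Lm = A.addSubgroupOf Lm := by
    ext ⟨x, hx⟩
    simp only [AddSubgroup.mem_addSubgroupOf, hA, hB, AddSubgroup.mem_inf]
    refine ⟨fun ⟨μ, q, hq, hxq⟩ => ⟨μ, q, hq.1, hxq⟩, fun ⟨μ, q, hq, hxq⟩ => ⟨μ, q, ⟨hq, ?_⟩, hxq⟩⟩
    rw [eq_sub_of_add_eq' hxq.symm]
    exact sub_mem hx (hD μ)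
  refine ⟨fun x hx => ?_, fun x hx => ?_, ⟨?_⟩⟩
  · obtain ⟨μ, q, hq, rfl⟩ := (hA x).mp hx
    exact add_mem (AddSubgroup.mem_sup_left (hD μ)) (AddSubgroup.mem_sup_right hq)
  · obtain ⟨μ, q, hq, rfl⟩ := (hB x).mp hx
    exact add_mem (hD μ) hq.2
  · rw [hBA]
    exact (QuotientAddGroup.quotientInfEquivSupQuotientOfLE Lm Q A hQA).symm

/-- For a lattice `L` with involution `θ` and a `θ`-stable finite-index
subgroup `Q`, with `L₋ = {ν | θν = -ν}`, `Q₋ = Q ∩ L₋`, and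
`(1-θ)(L) = 2L̃₋` (the image of twice the projection to the `(-1)`-eigenspace),
there is a group isomorphism `(L₋ + Q)/((1-θ)(L) + Q) ≅ L₋/(2L̃₋ + Q₋)`. -/
theorem stmt_16 {L : Type*} [AddCommGroup L] [Module.Free ℤ L] [Module.Finite ℤ L]
    (θ : L ≃+ L) (hθ : ∀ x, θ (θ x) = x)
    (Q : AddSubgroup L) (hQ : ∀ q ∈ Q, θ q ∈ Q) (hfin : Q.FiniteIndex)
    (Lm A B : AddSubgroup L)
    (hLm : ∀ x : L, x ∈ Lm ↔ θ x = -x)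
    (hA : ∀ x : L, x ∈ A ↔ ∃ μ : L, ∃ q ∈ Q, x = (μ - θ μ) + q)
    (hB : ∀ x : L, x ∈ B ↔ ∃ μ : L, ∃ q ∈ Q ⊓ Lm, x = (μ - θ μ) + q) :
    A ≤ Lm ⊔ Q ∧ B ≤ Lm ∧
    Nonempty ((↥(Lm ⊔ Q) ⧸ A.addSubgroupOf (Lm ⊔ Q)) ≃+
      (Lm ⧸ B.addSubgroupOf Lm)) :=
  stmt_16_general θ hθ Q Lm A B hLm hA hB
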